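/- arXiv:2401.04911 — 5 statements merged into one kernel-verified Lean document; each statement's English description precedes it below -/
import Mathlib

section
/- Let A be the n×n circulant 0-1 matrix over ℚ whose first column is (c_0, c_1, …, c_{n-1}) with c_0 = ⋯ = c_{t-1} = 1 and c_t = ⋯ = c_{n-1} = 0, i.e., A_{ij} = c_{(i-j) mod n}. Then rank(A) = n - gcd(n, t) + 1. -/
/-!
On `ZMod n`, the matrix is the circulant generated by the indicator of `{0, …, t-1}`, so it maps
`v` to its window sums `i ↦ ∑_{k<t} v (i - k)`. Consecutive window sums differ by
`v (i+1) - v (i+1-t)`, so a kernel vector is `t`-periodic, hence `gcd n t`-periodic, i.e. it factors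
through `ZMod (gcd n t)`; each window sum is then `t / gcd n t` times the total sum of the factor.
The kernel is therefore isomorphic to the zero-sum functions on `ZMod (gcd n t)`, of dimension
`gcd n t - 1`, and rank–nullity gives the rank.
-/

open Finset Function Matrix

def windowSum {G M : Type*} [AddGroupWithOne G] [AddCommMonoid M] (t : ℕ) (v : G → M) (i : G) :
    M :=
  ∑ k ∈ range t, v (i - k)

section windowSum

variable {G M : Type*} [AddCommGroupWithOne G] [AddCommGroup M]

lemma windowSum_add_one (t : ℕ) (v : G → M) (i : G) :
    windowSum t v (i + 1) + v (i + 1 - t) = v (i + 1) + windowSum t v i := by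
  rw [windowSum, windowSum, ← sum_range_succ (fun k : ℕ => v (i + 1 - k)), sum_range_succ']
  simp only [Nat.cast_succ, add_sub_add_right_eq_sub, Nat.cast_zero, sub_zero, add_comm]

lemma periodic_of_windowSum_eq_zero {t : ℕ} {v : G → M} (h : windowSum t v = 0) :
    Periodic v t := by
  intro x
  simpa [h] using (windowSum_add_one t v (x + t - 1)).symm

end windowSum

lemma windowSum_comp_ringHom {G H M : Type*} [Ring G] [Ring H] [AddCommMonoid M] (φ : G →+* H)
    (t : ℕ) (w : H → M) (i : G) : windowSum t (w ∘ φ) i = windowSum t w (φ i) := by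
  simp only [windowSum, Function.comp_apply, map_sub, map_natCast]

def ZMod.finEquivNatCast (n : ℕ) [NeZero n] : Fin n ≃ ZMod n where
  toFun i := (i : ℕ)
  invFun x := ⟨x.val, x.val_lt⟩
  left_inv i := Fin.ext (ZMod.val_cast_of_lt i.isLt)
  right_inv := ZMod.natCast_zmod_val

namespace ZMod

variable {M : Type*} [AddCommMonoid M]

lemma sum_range_natCast (d : ℕ) [NeZero d] (f : ZMod d → M) :
    ∑ k ∈ range d, f k = ∑ y, f y := by
  refine sum_nbij' (fun k => (k : ZMod d)) val (by simp) (by simp [val_lt]) ?_ ?_ (by simp)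
  · intro k hk
    exact val_cast_of_lt (mem_range.mp hk)
  · intro y _
    exact natCast_zmod_val y

lemma sum_range_mul_natCast (d : ℕ) [NeZero d] (f : ZMod d → M) (m : ℕ) :
    ∑ k ∈ range (d * m), f k = m • ∑ y, f y := by
  induction m with
  | zero => simp
  | succ m ih =>
    rw [mul_add_one, sum_range_add, ih, ← sum_range_natCast, succ_nsmul]
    simp

lemma windowSum_mul (d : ℕ) [NeZero d] (w : ZMod d → M) (m : ℕ) (x : ZMod d) :
    windowSum (d * m) w x = m • ∑ y, w y := by
  rw [windowSum, sum_range_mul_natCast d (fun y => w (x - y))]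
  exact congrArg _ (Equiv.sum_comp (Equiv.subLeft x) w)

end ZMod

lemma Function.Periodic.natCast_gcd {α : Type*} {n t : ℕ} {v : ZMod n → α}
    (h : Periodic v t) : Periodic v (n.gcd t) := by
  have : ((n.gcd t : ℕ) : ZMod n) = (n.gcdB t : ℤ) * t := by
    simpa [mul_comm] using congrArg (Int.cast : ℤ → ZMod n) (Nat.gcd_eq_gcd_ab n t)
  rw [this]
  exact h.int_mul _

lemma Function.Periodic.exists_comp_castHom {α : Type*} {n d : ℕ} [NeZero n] (hd : d ∣ n)
    {v : ZMod n → α} (h : Periodic v d) : ∃ w : ZMod d → α, v = w ∘ ZMod.castHom hd (ZMod d) := by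
  have : NeZero d := ⟨by rintro rfl; exact NeZero.ne n (zero_dvd_iff.mp hd)⟩
  refine ⟨v ∘ ZMod.cast, funext fun x => ?_⟩
  simp only [comp_apply, ZMod.castHom_apply, ZMod.cast_eq_val, ZMod.val_natCast]
  conv_lhs => rw [← ZMod.natCast_zmod_val x, ← Nat.mod_add_div x.val d]
  push_cast
  rw [mul_comm]
  exact h.nat_mul _ _

instance Nat.neZero_gcd_left (n t : ℕ) [NeZero n] : NeZero (n.gcd t) :=
  ⟨(Nat.gcd_pos_of_pos_left t (NeZero.pos n)).ne'⟩

lemma windowSum_eq_zero_iff {M : Type*} [AddCommGroup M] [IsAddTorsionFree M] {n t : ℕ}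
    [NeZero n] (ht : 0 < t) (v : ZMod n → M) :
    windowSum t v = 0 ↔ ∃ w : ZMod (n.gcd t) → M,
      ∑ y, w y = 0 ∧ v = w ∘ ZMod.castHom (n.gcd_dvd_left t) (ZMod (n.gcd t)) := by
  obtain ⟨m, hm⟩ := Nat.gcd_dvd_right n t
  have hm0 : m ≠ 0 := by rintro rfl; omega
  have window_comp (w : ZMod (n.gcd t) → M) (i : ZMod n) :
      windowSum t (w ∘ ZMod.castHom (n.gcd_dvd_left t) _) i = m • ∑ y, w y := by
    rw [windowSum_comp_ringHom, ← ZMod.windowSum_mul, ← hm]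
  constructor
  · intro h
    obtain ⟨w, rfl⟩ :=
      (periodic_of_windowSum_eq_zero h).natCast_gcd.exists_comp_castHom (n.gcd_dvd_left t)
    refine ⟨w, ?_, rfl⟩
    rw [← nsmul_eq_zero_iff_right hm0, ← window_comp w 0, h, Pi.zero_apply]
  · rintro ⟨w, hw, rfl⟩
    funext i
    rw [Pi.zero_apply, window_comp, hw, smul_zero]

lemma Matrix.circulant_mulVec_apply {n R : Type*} [AddCommGroup n] [Fintype n]
    [NonUnitalNonAssocSemiring R] (c v : n → R) (i : n) :
    (circulant c *ᵥ v) i = ∑ k, c k * v (i - k) := by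
  rw [mulVec, dotProduct, ← Equiv.sum_comp (Equiv.subLeft i)]
  simp [sub_sub_cancel]

lemma circulant_indicator_mulVec {R : Type*} [NonAssocSemiring R] {n t : ℕ} [NeZero n]
    (htn : t ≤ n) (v : ZMod n → R) :
    circulant (fun k : ZMod n => if k.val < t then (1 : R) else 0) *ᵥ v = windowSum t v := by
  funext i
  simp only [circulant_mulVec_apply, ite_mul, one_mul, zero_mul, windowSum]
  rw [← ZMod.sum_range_natCast n (fun k => if k.val < t then v (i - k) else 0), ← sum_filter]
  refine sum_congr ?_ fun _ _ => rfl
  ext k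
  simp only [mem_filter, mem_range]
  constructor
  · rintro ⟨hkn, hkt⟩
    rwa [ZMod.val_cast_of_lt hkn] at hkt
  · intro hkt
    exact ⟨hkt.trans_le htn, by rwa [ZMod.val_cast_of_lt (hkt.trans_le htn)]⟩

lemma finrank_ker_circulant_indicator {K : Type*} [Field K] [CharZero K] {n t : ℕ} [NeZero n]
    (ht : 0 < t) (htn : t ≤ n) :
    Module.finrank K (LinearMap.ker
      (circulant fun k : ZMod n => if k.val < t then (1 : K) else 0).mulVecLin) = n.gcd t - 1 := by
  set φ := ZMod.castHom (n.gcd_dvd_left t) (ZMod (n.gcd t))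
  set σ : Module.Dual K (ZMod (n.gcd t) → K) := ∑ y, LinearMap.proj y
  have hker : LinearMap.ker (circulant fun k : ZMod n => if k.val < t then (1 : K) else 0).mulVecLin
      = (LinearMap.ker σ).map (LinearMap.funLeft K K φ) := by
    ext v
    rw [LinearMap.mem_ker, mulVecLin_apply, circulant_indicator_mulVec htn,
      windowSum_eq_zero_iff ht, Submodule.mem_map]
    exact exists_congr fun w => and_congr (by simp [σ]) eq_comm
  have hσ : σ ≠ 0 := by
    intro h
    simpa [σ] using LinearMap.congr_fun h (Pi.single 0 1)
  have := Module.Dual.finrank_ker_add_one_of_ne_zero hσ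
  rw [Module.finrank_fintype_fun_eq_card, ZMod.card] at this
  rw [hker, ← (Submodule.equivMapOfInjective _ (LinearMap.funLeft_injective_of_surjective _ _ _
    (ZMod.castHom_surjective _)) _).finrank_eq]
  omega

lemma rank_circulant_indicator {K : Type*} [Field K] [CharZero K] {n t : ℕ} [NeZero n]
    (ht : 0 < t) (htn : t ≤ n) :
    (circulant fun k : ZMod n => if k.val < t then (1 : K) else 0).rank = n - n.gcd t + 1 := by
  have hrank := LinearMap.finrank_range_add_finrank_ker
    (circulant fun k : ZMod n => if k.val < t then (1 : K) else 0).mulVecLin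
  rw [finrank_ker_circulant_indicator ht htn, Module.finrank_fintype_fun_eq_card,
    ZMod.card] at hrank
  have hgcd_pos := Nat.gcd_pos_of_pos_right n ht
  have hgcd_le := Nat.gcd_le_right (m := n) ht
  rw [Matrix.rank]
  omega

/-- The rank of the `n × n` circulant 0-1 matrix whose first column is
`c_0 = ⋯ = c_{t-1} = 1`, `c_t = ⋯ = c_{n-1} = 0` equals `n - gcd(n,t) + 1`. -/
theorem rank_circulant_path_matrix (n t : ℕ) (ht : 1 ≤ t) (htn : t ≤ n) :
    (Matrix.of (fun i j : Fin n =>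
      if (((i : ZMod n) - (j : ZMod n)).val < t) then (1 : ℚ) else 0)).rank
      = n - Nat.gcd n t + 1 := by
  have : NeZero n := ⟨by omega⟩
  rw [show Matrix.of (fun i j : Fin n =>
      if (((i : ZMod n) - (j : ZMod n)).val < t) then (1 : ℚ) else 0) =
      (circulant fun k : ZMod n => if k.val < t then (1 : ℚ) else 0).submatrix
        (ZMod.finEquivNatCast n) (ZMod.finEquivNatCast n) from rfl,
    rank_submatrix, rank_circulant_indicator ht htn]
end

section
/- Let n be a positive integer, t a positive integer with d = gcd(n,t), and let S = K[x_1,…,x_n] with indices taken modulo n. Define u_j = x_j x_{j+1} ⋯ x_{j+t-1} for j = 1,…,n. For each residue class i modulo d, let m_i = ∏_{j ≡ i (mod d), 1 ≤ j ≤ n} u_j. Then m_1 = m_2 = ⋯ = m_d = (x_1 ⋯ x_n)^{t/d} as monomials in S. -/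
/-!
Index the variables by `ZMod n`. The starting points `j` of the paths form the coset of `i`
modulo `d`, and the `a`-th vertices of these paths form the coset of `i + a`. As `a` runs
through the `t = (t / d) * d` values `0, …, t - 1`, the residue `i + a` runs `t / d` times
through `ZMod d`, and the cosets modulo `d` partition `ZMod n`.
-/

open Finset MvPolynomial

namespace ZMod

variable {M : Type*} [CommMonoid M]

theorem prod_range_natCast (n : ℕ) [NeZero n] (f : ZMod n → M) :
    ∏ j ∈ range n, f j = ∏ v, f v :=
  prod_nbij' Nat.cast val (fun _ _ ↦ mem_univ _) (fun v _ ↦ mem_range.2 v.val_lt)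
    (fun _ hj ↦ val_cast_of_lt (mem_range.1 hj)) (fun v _ ↦ natCast_zmod_val v) fun _ _ ↦ rfl

theorem prod_range_natCast_add_one (n : ℕ) [NeZero n] (f : ZMod n → M) :
    ∏ j ∈ range n, f ((j + 1 : ℕ) : ZMod n) = ∏ v, f v := by
  push_cast
  rw [prod_range_natCast n (fun v ↦ f (v + 1))]
  exact Fintype.prod_equiv (Equiv.addRight 1) _ _ fun _ ↦ rfl

theorem prod_Icc_natCast (n : ℕ) [NeZero n] (f : ZMod n → M) :
    ∏ j ∈ Icc 1 n, f j = ∏ v, f v := by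
  rw [← Ico_add_one_right_eq_Icc, prod_Ico_eq_prod_range, Nat.add_sub_cancel]
  simpa only [add_comm 1] using prod_range_natCast_add_one n f

theorem prod_range_mul_natCast (d : ℕ) [NeZero d] (f : ZMod d → M) (k : ℕ) :
    ∏ a ∈ range (k * d), f a = (∏ r, f r) ^ k := by
  induction k with
  | zero => simp
  | succ k ih =>
    rw [add_one_mul, prod_range_add, ih, pow_succ, ← prod_range_natCast d f]
    congr 1
    refine prod_congr rfl fun a _ ↦ ?_
    simp

theorem prod_filter_castHom_add {n d : ℕ} [NeZero n] (hd : d ∣ n) (f : ZMod n → M) (i : ZMod d)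
    (c : ZMod n) :
    ∏ v with castHom hd (ZMod d) v = i, f (v + c) =
      ∏ w with castHom hd (ZMod d) w = i + castHom hd (ZMod d) c, f w := by
  rw [prod_filter, prod_filter]
  refine Fintype.prod_equiv (Equiv.addRight c) _ _ fun v ↦ ?_
  simp only [Equiv.coe_addRight, map_add, add_left_inj]

theorem prod_filter_castHom_prod_range_add {n d t : ℕ} [NeZero n] (hd : d ∣ n) (hdt : d ∣ t)
    (f : ZMod n → M) (i : ZMod d) :
    ∏ v with castHom hd (ZMod d) v = i, ∏ a ∈ range t, f (v + a) = (∏ v, f v) ^ (t / d) := by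
  have : NeZero d := ⟨(Nat.pos_of_dvd_of_pos hd (NeZero.pos n)).ne'⟩
  set coset : ZMod d → M := fun r ↦ ∏ w with castHom hd (ZMod d) w = r, f w
  calc ∏ v with castHom hd (ZMod d) v = i, ∏ a ∈ range t, f (v + a)
      = ∏ a ∈ range t, coset (i + a) := by
        rw [prod_comm]
        exact prod_congr rfl fun a _ ↦ by rw [prod_filter_castHom_add, map_natCast]
    _ = (∏ r, coset (i + r)) ^ (t / d) := by
        rw [← Nat.div_mul_cancel hdt, Nat.mul_div_cancel _ (NeZero.pos d)]
        exact prod_range_mul_natCast d (fun r ↦ coset (i + r)) _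
    _ = (∏ v, f v) ^ (t / d) := by
        rw [Fintype.prod_equiv (Equiv.addLeft i) (fun r ↦ coset (i + r)) coset fun _ ↦ rfl,
          prod_fiberwise]

end ZMod

theorem path_monomial_products_eq_general (K : Type*) [Field K] (n t : ℕ)
    (hn : 0 < n) (i : ℕ) :
    (∏ j ∈ (Finset.Icc 1 n).filter
        (fun j => j % Nat.gcd n t = i % Nat.gcd n t),
      ∏ a ∈ Finset.range t, (X ((j + a : ℕ) : ZMod n) : MvPolynomial (ZMod n) K))
    = (∏ j ∈ Finset.range n, (X ((j + 1 : ℕ) : ZMod n) : MvPolynomial (ZMod n) K))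
        ^ (t / Nat.gcd n t) := by
  have : NeZero n := ⟨hn.ne'⟩
  set d := Nat.gcd n t
  have hd : d ∣ n := Nat.gcd_dvd_left n t
  have hmod (j : ℕ) : j % d = i % d ↔ ZMod.castHom hd (ZMod d) j = i := by
    rw [map_natCast, ZMod.natCast_eq_natCast_iff']
  rw [ZMod.prod_range_natCast_add_one, prod_filter, ← ZMod.prod_filter_castHom_prod_range_add hd
    (Nat.gcd_dvd_right n t) X i, prod_filter]
  simp only [hmod, Nat.cast_add]
  exact ZMod.prod_Icc_natCast n fun v ↦
    if ZMod.castHom hd (ZMod d) v = i then ∏ a ∈ range t, X (v + a) else 1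

/-- With `u_j = x_j x_{j+1} ⋯ x_{j+t-1}` (indices mod `n`) and
`m_i = ∏_{j ≡ i (mod d), 1 ≤ j ≤ n} u_j` where `d = gcd(n,t)`, one has
`m_i = (x_1 ⋯ x_n)^{t/d}` for every residue class `i`. -/
theorem path_monomial_products_eq (K : Type*) [Field K] (n t : ℕ)
    (hn : 0 < n) (ht : 0 < t) (i : ℕ) :
    (∏ j ∈ (Finset.Icc 1 n).filter
        (fun j => j % Nat.gcd n t = i % Nat.gcd n t),
      ∏ a ∈ Finset.range t, (X ((j + a : ℕ) : ZMod n) : MvPolynomial (ZMod n) K))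
    = (∏ j ∈ Finset.range n, (X ((j + 1 : ℕ) : ZMod n) : MvPolynomial (ZMod n) K))
        ^ (t / Nat.gcd n t) :=
  path_monomial_products_eq_general K n t hn i
end

section
/- Let R = K[y_1,…,y_n] with d | n, d ≥ 2, m_i = ∏_{j ≡ i (mod d)} y_j, and H' = (m_1 - m_d, …, m_{d-1} - m_d). Then R/H' is an integral domain; equivalently, H' is a prime ideal. -/
/-!
The relations `m_i = m_d` come from disjoint squarefree monomials. Solving `m_i = m_d` for the
first variable `y_i` of each class `i < d` gives a monomial map into Laurent monomials
(the localization at all variables); its target is a domain, so it suffices that the ideal is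
its kernel. The kernel of a monomial map is spanned by the binomials `y^u - y^v` whose exponents
have equal images, here exactly those with `u - v = ∑ c_i (e_{A_i} - e_B)`; since the classes
are disjoint, such `y^u` and `y^v` both reduce to a common monomial by trading whole factors
`m_i` for `m_d`.
-/

open MvPolynomial

namespace AddMonoidAlgebra

variable {R M N : Type*} [Ring R] [AddMonoid M]

/-- A section `τ` of `f` on its range moves every `p` to `mapDomain (τ ∘ f) p` through the
binomials of `hI`. -/
theorem mem_ideal_of_mapDomain_eq_zero {I : Ideal (AddMonoidAlgebra R M)} (f : M → N)
    (hI : ∀ u v, f u = f v → single u (1 : R) - single v 1 ∈ I)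
    {p : AddMonoidAlgebra R M} (hp : mapDomain f p = 0) : p ∈ I := by
  have hτ : ∀ u, f (Function.invFun f (f u)) = f u := fun u => Function.invFun_eq ⟨u, rfl⟩
  have hmove : ∀ q : AddMonoidAlgebra R M,
      q - mapDomain (Function.invFun f) (mapDomain f q) ∈ I := by
    intro q
    induction q using AddMonoidAlgebra.induction_linear with
    | zero => simp
    | add q q' hq hq' =>
      rw [mapDomain_add, mapDomain_add]
      convert I.add_mem hq hq' using 1
      abel
    | single u c =>
      rw [mapDomain_single, mapDomain_single]
      convert I.mul_mem_left (single 0 c) (hI u _ (hτ u).symm) using 1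
      rw [mul_sub, single_mul_single, single_mul_single, zero_add, zero_add, mul_one]
  simpa [hp] using hmove p

end AddMonoidAlgebra

noncomputable section
namespace SqfreeBinomial

variable {σ R : Type*} [CommRing R]

def sqfreeExp (A : Finset σ) : σ →₀ ℕ := ∑ k ∈ A, Finsupp.single k 1

theorem sqfreeExp_apply [DecidableEq σ] (A : Finset σ) (k : σ) :
    sqfreeExp A k = if k ∈ A then 1 else 0 := by
  simp [sqfreeExp, Finsupp.finsetSum_apply, Finsupp.single_apply]

variable (R) in
theorem monomial_sqfreeExp (A : Finset σ) :
    monomial (sqfreeExp A) (1 : R) = ∏ k ∈ A, X k :=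
  monomial_sum_one A _

def castExp : (σ →₀ ℕ) →+ (σ →₀ ℤ) := Finsupp.mapRange.addMonoidHom (Nat.castAddMonoidHom ℤ)

@[simp]
theorem castExp_apply (u : σ →₀ ℕ) (k : σ) : castExp u k = u k := rfl

theorem castExp_injective : Function.Injective (castExp (σ := σ)) :=
  Finsupp.mapRange_injective _ (map_zero _) Nat.cast_injective

def expDiff (A B : Finset σ) : σ →₀ ℤ := castExp (sqfreeExp A) - castExp (sqfreeExp B)

theorem expDiff_apply [DecidableEq σ] (A B : Finset σ) (k : σ) :
    expDiff A B k = (if k ∈ A then 1 else 0) - (if k ∈ B then 1 else 0) := by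
  simp only [expDiff, Finsupp.coe_sub, Pi.sub_apply, castExp_apply, sqfreeExp_apply]
  split_ifs <;> simp

variable {S : Finset σ} {A : σ → Finset σ} {B : Finset σ}

theorem sum_ite_mem_eq_of_mem {M : Type*} [AddCommMonoid M] [DecidableEq σ]
    (hdisj : (S : Set σ).PairwiseDisjoint A) {i k : σ} (hi : i ∈ S) (hk : k ∈ A i)
    (f : σ → M) : ∑ j ∈ S, (if k ∈ A j then f j else 0) = f i := by
  rw [Finset.sum_eq_single_of_mem i hi, if_pos hk]
  intro j hj hji
  exact if_neg fun hkj => Finset.disjoint_left.mp (hdisj hj hi hji) hkj hk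

theorem sum_smul_expDiff_apply_of_mem (hdisj : (S : Set σ).PairwiseDisjoint A)
    (hB : ∀ i ∈ S, Disjoint (A i) B) (c : σ → ℤ) {i k : σ} (hi : i ∈ S) (hk : k ∈ A i) :
    (∑ j ∈ S, c j • expDiff (A j) B) k = c i := by
  classical
  have hkB : k ∉ B := Finset.disjoint_left.mp (hB i hi) hk
  simp only [Finsupp.finsetSum_apply, Finsupp.smul_apply, expDiff_apply, if_neg hkB,
    sub_zero, smul_eq_mul, mul_ite, mul_one, mul_zero]
  exact sum_ite_mem_eq_of_mem hdisj hi hk c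

/-- On `A i` the difference `u - v` equals `c i`, so `u` dominates `(c i)⁺` there. -/
theorem sum_toNat_smul_sqfreeExp_le (hdisj : (S : Set σ).PairwiseDisjoint A)
    (hB : ∀ i ∈ S, Disjoint (A i) B) {u v : σ →₀ ℕ} {c : σ → ℤ}
    (h : castExp u - castExp v = ∑ i ∈ S, c i • expDiff (A i) B) :
    ∑ i ∈ S, (c i).toNat • sqfreeExp (A i) ≤ u := by
  classical
  intro k
  simp only [Finsupp.finsetSum_apply, Finsupp.smul_apply, sqfreeExp_apply, smul_eq_mul,
    mul_ite, mul_one, mul_zero]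
  by_cases hk : ∃ i ∈ S, k ∈ A i
  · obtain ⟨i, hi, hki⟩ := hk
    rw [sum_ite_mem_eq_of_mem hdisj hi hki]
    have hcoord := congrArg (· k) h
    simp only [Finsupp.coe_sub, Pi.sub_apply, castExp_apply,
      sum_smul_expDiff_apply_of_mem hdisj hB c hi hki] at hcoord
    omega
  · push Not at hk
    rw [Finset.sum_eq_zero fun j hj => if_neg (hk j hj)]
    exact Nat.zero_le _

variable (R S A B) in
def binomialSpan : Ideal (MvPolynomial σ R) :=
  Ideal.span ((fun i => ∏ k ∈ A i, X k - ∏ k ∈ B, X k) '' S)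

theorem mk_monomial_add_sum_smul_sqfreeExp (w : σ →₀ ℕ) (p : σ → ℕ) :
    Ideal.Quotient.mk (binomialSpan R S A B) (monomial (w + ∑ i ∈ S, p i • sqfreeExp (A i)) 1) =
      Ideal.Quotient.mk (binomialSpan R S A B) (monomial (w + (∑ i ∈ S, p i) • sqfreeExp B) 1) := by
  set mk := Ideal.Quotient.mk (binomialSpan R S A B)
  have hmul : ∀ a b : σ →₀ ℕ, mk (monomial (a + b) 1) = mk (monomial a 1) * mk (monomial b 1) :=
    fun a b => by rw [← map_mul, monomial_mul, mul_one]
  have hpow : ∀ (n : ℕ) (a : σ →₀ ℕ), mk (monomial (n • a) 1) = mk (monomial a 1) ^ n :=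
    fun n a => by rw [← map_pow, monomial_pow, one_pow]
  have hgen : ∀ i ∈ S, mk (monomial (sqfreeExp (A i)) 1) = mk (monomial (sqfreeExp B) 1) :=
    fun i hi => Ideal.Quotient.eq.mpr <| Ideal.subset_span <| by
      simp only [monomial_sqfreeExp]
      exact ⟨i, hi, rfl⟩
  rw [hmul, hmul, hpow, monomial_sum_one, map_prod]
  simp only [hpow]
  rw [Finset.prod_congr rfl fun i hi => by rw [hgen i hi], Finset.prod_pow_eq_pow_sum]

theorem monomial_sub_monomial_mem_binomialSpan (hdisj : (S : Set σ).PairwiseDisjoint A)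
    (hB : ∀ i ∈ S, Disjoint (A i) B) {u v : σ →₀ ℕ} {c : σ → ℤ}
    (h : castExp u - castExp v = ∑ i ∈ S, c i • expDiff (A i) B) :
    monomial u (1 : R) - monomial v 1 ∈ binomialSpan R S A B := by
  have h' : castExp v - castExp u = ∑ i ∈ S, (-c i) • expDiff (A i) B := by
    simp only [neg_smul, Finset.sum_neg_distrib, ← h, neg_sub]
  -- Split off `(c i)⁺` copies of `A i` from `u` and `(c i)⁻` from `v`; trading them for copies
  -- of `B` leaves the same monomial on both sides.
  obtain ⟨u₀, rfl⟩ := le_iff_exists_add'.mp (sum_toNat_smul_sqfreeExp_le hdisj hB h)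
  obtain ⟨v₀, rfl⟩ := le_iff_exists_add'.mp (sum_toNat_smul_sqfreeExp_le hdisj hB h')
  have hbal : u₀ + (∑ i ∈ S, (c i).toNat) • sqfreeExp B
      = v₀ + (∑ i ∈ S, (-c i).toNat) • sqfreeExp B := by
    have hc : ∀ i, c i • expDiff (A i) B
        = (c i).toNat • expDiff (A i) B - (-c i).toNat • expDiff (A i) B := fun i => by
      rw [← natCast_zsmul, ← natCast_zsmul, ← sub_smul, Int.toNat_sub_toNat_neg]
    apply castExp_injective
    simp only [hc, Finset.sum_sub_distrib] at h
    simp only [expDiff, smul_sub, Finset.sum_sub_distrib, map_add, map_nsmul, map_sum,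
      Finset.sum_smul] at h ⊢
    rw [← sub_eq_zero] at h ⊢
    rw [← h]
    abel
  rw [← Ideal.Quotient.eq, mk_monomial_add_sum_smul_sqfreeExp, mk_monomial_add_sum_smul_sqfreeExp,
    hbal]

variable (S A B) in
def latticeProj : (σ →₀ ℤ) →ₗ[ℤ] (σ →₀ ℤ) :=
  LinearMap.id - ∑ i ∈ S, (Finsupp.lapply i).smulRight (expDiff (A i) B)

theorem latticeProj_apply (w : σ →₀ ℤ) :
    latticeProj S A B w = w - ∑ i ∈ S, w i • expDiff (A i) B := by
  simp [latticeProj]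

theorem latticeProj_expDiff (hself : ∀ i ∈ S, i ∈ A i) (hdisj : (S : Set σ).PairwiseDisjoint A)
    (hB : ∀ i ∈ S, Disjoint (A i) B) {j : σ} (hj : j ∈ S) :
    latticeProj S A B (expDiff (A j) B) = 0 := by
  classical
  have hcoord : ∀ i ∈ S, expDiff (A j) B i = if j = i then 1 else 0 := fun i hi => by
    have hiB : i ∉ B := Finset.disjoint_left.mp (hB i hi) (hself i hi)
    have hiA : i ∈ A j ↔ j = i :=
      ⟨fun h => by_contra fun hji => Finset.disjoint_left.mp (hdisj hj hi hji) h (hself i hi),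
        fun h => h ▸ hself i hi⟩
    simp only [expDiff_apply, hiA, if_neg hiB, sub_zero]
  rw [latticeProj_apply, Finset.sum_congr rfl fun i hi => by rw [hcoord i hi, ite_smul,
    one_smul, zero_smul], Finset.sum_ite_eq, if_pos hj, sub_self]

theorem eq_sum_of_latticeProj_eq_zero {w : σ →₀ ℤ} (hw : latticeProj S A B w = 0) :
    w = ∑ i ∈ S, w i • expDiff (A i) B := by
  rwa [latticeProj_apply, sub_eq_zero] at hw

variable (R S A B) in
/-- `X i ↦ m_B / (m_{A i} / X i)` for `i ∈ S`, the other variables fixed: the relation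
`m_{A i} = m_B` solved for `X i` in the localization at all variables. -/
def laurentMap : MvPolynomial σ R →+* AddMonoidAlgebra R (σ →₀ ℤ) :=
  AddMonoidAlgebra.mapDomainRingHom R ((latticeProj S A B).toAddMonoidHom.comp castExp)

theorem laurentMap_monomial (u : σ →₀ ℕ) (r : R) :
    laurentMap R S A B (monomial u r) =
      AddMonoidAlgebra.single (latticeProj S A B (castExp u)) r := by
  rw [← single_eq_monomial, laurentMap, AddMonoidAlgebra.mapDomainRingHom_apply,
    AddMonoidAlgebra.mapDomain_single]
  rfl

theorem binomialSpan_eq_ker_laurentMap (hself : ∀ i ∈ S, i ∈ A i)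
    (hdisj : (S : Set σ).PairwiseDisjoint A) (hB : ∀ i ∈ S, Disjoint (A i) B) :
    binomialSpan R S A B = RingHom.ker (laurentMap R S A B) := by
  apply le_antisymm
  · rw [binomialSpan, Ideal.span_le]
    rintro _ ⟨i, hi, rfl⟩
    simp only [SetLike.mem_coe, RingHom.mem_ker, ← monomial_sqfreeExp R]
    rw [map_sub, laurentMap_monomial, laurentMap_monomial, sub_eq_zero]
    congr 1
    rw [← sub_eq_zero, ← map_sub]
    exact latticeProj_expDiff hself hdisj hB hi
  · intro p hp
    refine AddMonoidAlgebra.mem_ideal_of_mapDomain_eq_zero _ (fun u v huv => ?_) hp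
    rw [single_eq_monomial, single_eq_monomial]
    refine monomial_sub_monomial_mem_binomialSpan hdisj hB (eq_sum_of_latticeProj_eq_zero ?_)
    rw [map_sub]
    exact sub_eq_zero.mpr huv

theorem isPrime_binomialSpan [IsDomain R] (hself : ∀ i ∈ S, i ∈ A i)
    (hdisj : (S : Set σ).PairwiseDisjoint A) (hB : ∀ i ∈ S, Disjoint (A i) B) :
    (binomialSpan R S A B).IsPrime := by
  rw [binomialSpan_eq_ker_laurentMap hself hdisj hB]
  exact RingHom.ker_isPrime _

end SqfreeBinomial
end

open SqfreeBinomial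

def residueClass (n d i : ℕ) : Finset (Fin n) := {j | (j.val + 1) % d = i % d}

theorem mem_residueClass {n d i : ℕ} {j : Fin n} :
    j ∈ residueClass n d i ↔ (j.val + 1) % d = i % d := by
  simp [residueClass]

theorem disjoint_residueClass {n d i i' : ℕ} (h : i % d ≠ i' % d) :
    Disjoint (residueClass n d i) (residueClass n d i') :=
  Finset.disjoint_left.mpr fun _ hj hj' =>
    h <| (mem_residueClass.mp hj).symm.trans (mem_residueClass.mp hj')

/-- Classes with `n < i < d` are empty, so their relations vanish; the others are indexed by
their smallest variable `k`, which has `k + 1 = i`. -/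
theorem span_fiber_relations_eq_binomialSpan {R : Type*} [CommRing R] {n d : ℕ}
    (m : ℕ → MvPolynomial (Fin n) R) (hm : ∀ i, m i = ∏ j ∈ residueClass n d i, X j) :
    Ideal.span ((fun i => m i - m d) '' Set.Icc 1 (d - 1)) =
      binomialSpan R {k | k.val + 1 < d} (fun k => residueClass n d (k.val + 1))
        (residueClass n d d) := by
  apply le_antisymm
  · refine Ideal.span_le.mpr ?_
    rintro _ ⟨i, ⟨hi1, hid⟩, rfl⟩
    by_cases hin : i ≤ n
    · refine Ideal.subset_span ⟨⟨i - 1, by omega⟩, by simp; omega, ?_⟩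
      simp only [hm, Nat.sub_add_cancel hi1]
    · have hempty : residueClass n d i = residueClass n d d := by
        ext j
        simp only [mem_residueClass, Nat.mod_self, Nat.mod_eq_of_lt (by omega : i < d),
          Nat.mod_eq_of_lt (by omega : j.val + 1 < d)]
        omega
      simp [hm, hempty]
  · refine Ideal.span_mono ?_
    rintro _ ⟨k, hk, rfl⟩
    simp only [Finset.coe_filter, Finset.mem_univ, true_and, Set.mem_ofPred_eq] at hk
    exact ⟨k.val + 1, ⟨by omega, by omega⟩, by simp only [hm]⟩

theorem fiber_relations_isPrime_general (K : Type*) [Field K] (n d : ℕ)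
    (m : ℕ → MvPolynomial (Fin n) K)
    (hm : ∀ i, m i = ∏ j ∈ Finset.univ.filter
        (fun j : Fin n => (j.val + 1) % d = i % d), X j) :
    (Ideal.span ((fun i => m i - m d) '' Set.Icc 1 (d - 1))).IsPrime := by
  rw [span_fiber_relations_eq_binomialSpan m hm]
  have hmod : ∀ k : Fin n, k.val + 1 < d → (k.val + 1) % d = k.val + 1 := fun k hk =>
    Nat.mod_eq_of_lt hk
  refine isPrime_binomialSpan (fun k _ => mem_residueClass.mpr rfl) ?_ ?_
  · intro k hk k' hk' hkk'
    simp only [Finset.coe_filter, Finset.mem_univ, true_and, Set.mem_ofPred_eq] at hk hk'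
    refine disjoint_residueClass ?_
    rw [hmod k hk, hmod k' hk']
    exact fun h => hkk' (Fin.ext (by omega))
  · intro k hk
    simp only [Finset.mem_filter, Finset.mem_univ, true_and] at hk
    refine disjoint_residueClass ?_
    rw [hmod k hk, Nat.mod_self]
    omega

/-- With `m_i = ∏_{j ≡ i (mod d)} y_j`, the ideal
`H' = (m_1 - m_d, …, m_{d-1} - m_d)` is a prime ideal; equivalently,
`R/H'` is an integral domain. -/
theorem fiber_relations_isPrime (K : Type*) [Field K] (n d : ℕ)
    (hd : 2 ≤ d) (hdn : d ∣ n)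
    (m : ℕ → MvPolynomial (Fin n) K)
    (hm : ∀ i, m i = ∏ j ∈ Finset.univ.filter
        (fun j : Fin n => (j.val + 1) % d = i % d), X j) :
    (Ideal.span ((fun i => m i - m d) '' Set.Icc 1 (d - 1))).IsPrime :=
  fiber_relations_isPrime_general K n d m hm
end

section
/- Let T = K[x_0,…,x_{n-1}, y_0,…,y_{n-1}] with indices modulo n, and let L ⊂ T be the ideal generated by f_1, …, f_{n-1}, g_1, where f_j = x_{j-2} y_j - x_j y_{j+1} for j = 1,…,n-1 and g_1 = x_0 y_1 - x_{n-2} y_0. Then for every k with 1 ≤ k ≤ ⌊n/2⌋, the binomial g_k = x_{2k-2} · ∏_{i ∈ [0,2k), i odd} y_i − x_{n-2} · ∏_{i ∈ [0,2k), i even} y_i belongs to L. -/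
/-!
Reindexing the products over odd and even `i < 2k` as products over `i < k`, the binomials
satisfy `g_{k+1} = y_{2k} g_k - (∏_{i<k} y_{2i+1}) f_{2k}`, so induction on `k` starting from
`g_1` puts every `g_k` in `L`.
-/

open Finset MvPolynomial

theorem prod_filter_odd_range_two_mul {M : Type*} [CommMonoid M] (f : ℕ → M) (k : ℕ) :
    ∏ i ∈ (range (2 * k)).filter Odd, f i = ∏ i ∈ range k, f (2 * i + 1) := by
  induction k with
  | zero => simp
  | succ k ih =>
    rw [prod_range_succ, ← ih, show 2 * (k + 1) = 2 * k + 1 + 1 by ring, range_add_one,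
      range_add_one, filter_insert, filter_insert, if_pos (odd_two_mul_add_one k),
      if_neg (Nat.not_odd_iff_even.2 (even_two_mul k)), prod_insert (by simp), mul_comm]

theorem prod_filter_even_range_two_mul {M : Type*} [CommMonoid M] (f : ℕ → M) (k : ℕ) :
    ∏ i ∈ (range (2 * k)).filter Even, f i = ∏ i ∈ range k, f (2 * i) := by
  induction k with
  | zero => simp
  | succ k ih =>
    rw [prod_range_succ, ← ih, show 2 * (k + 1) = 2 * k + 1 + 1 by ring, range_add_one,
      range_add_one, filter_insert, filter_insert,
      if_neg (Nat.not_even_iff_odd.2 (odd_two_mul_add_one k)), if_pos (even_two_mul k),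
      prod_insert (by simp), mul_comm]

theorem mul_prod_odd_sub_mul_prod_even_mem {R : Type*} [CommRing R] {I : Ideal R}
    {a b : ℕ → R} {c : R} {m : ℕ} (h₀ : a 0 * b 1 - c * b 0 ∈ I)
    (hstep : ∀ j < m, a (2 * j) * b (2 * j + 2) - a (2 * j + 2) * b (2 * j + 3) ∈ I) :
    ∀ k ≤ m, a (2 * k) * ∏ i ∈ range (k + 1), b (2 * i + 1)
      - c * ∏ i ∈ range (k + 1), b (2 * i) ∈ I := by
  intro k hk
  induction k with
  | zero => simpa using h₀
  | succ k ih =>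
    have key := I.sub_mem (I.mul_mem_left (b (2 * k + 2)) (ih (by omega)))
      (I.mul_mem_left (∏ i ∈ range (k + 1), b (2 * i + 1)) (hstep k (by omega)))
    convert key using 1
    rw [prod_range_succ (fun i => b (2 * i + 1)), prod_range_succ (fun i => b (2 * i)),
      show 2 * (k + 1) = 2 * k + 2 by ring]
    ring

theorem gk_mem_symmetric_ideal_general (K : Type*) [Field K] (n : ℕ)
    (x y : ZMod n → MvPolynomial (ZMod n ⊕ ZMod n) K)
    (L : Ideal (MvPolynomial (ZMod n ⊕ ZMod n) K))
    (hL : L = Ideal.span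
      ({p | ∃ j : ℕ, 1 ≤ j ∧ j ≤ n - 1 ∧
          p = x ((j : ZMod n) - 2) * y (j : ZMod n)
            - x (j : ZMod n) * y ((j : ZMod n) + 1)} ∪
        {x 0 * y 1 - x ((n : ZMod n) - 2) * y 0})) :
    ∀ k : ℕ, 1 ≤ k → k ≤ n / 2 →
      x (((2 * k - 2 : ℕ) : ZMod n))
          * ∏ i ∈ (Finset.range (2 * k)).filter (fun i => Odd i), y (i : ZMod n)
        - x ((n : ZMod n) - 2)
          * ∏ i ∈ (Finset.range (2 * k)).filter (fun i => Even i), y (i : ZMod n)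
        ∈ L := by
  intro k hk₁ hk₂
  obtain ⟨m, rfl⟩ : ∃ m, k = m + 1 := ⟨k - 1, by omega⟩
  have hg₁ : x ((0 : ℕ) : ZMod n) * y ((1 : ℕ) : ZMod n)
      - x ((n : ZMod n) - 2) * y ((0 : ℕ) : ZMod n) ∈ L := by
    rw [hL]
    exact Ideal.subset_span (Or.inr (by simp))
  have hf : ∀ j < m, x ((2 * j : ℕ) : ZMod n) * y ((2 * j + 2 : ℕ) : ZMod n)
      - x ((2 * j + 2 : ℕ) : ZMod n) * y ((2 * j + 3 : ℕ) : ZMod n) ∈ L := by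
    intro j hj
    rw [hL]
    exact Ideal.subset_span (Or.inl ⟨2 * j + 2, by omega, by omega, by push_cast; ring_nf⟩)
  rw [prod_filter_odd_range_two_mul, prod_filter_even_range_two_mul,
    show 2 * (m + 1) - 2 = 2 * m by omega]
  exact mul_prod_odd_sub_mul_prod_even_mem (I := L) (a := fun i : ℕ => x i)
    (b := fun i : ℕ => y i) (c := x ((n : ZMod n) - 2)) hg₁ hf m le_rfl

/-- In `T = K[x_0,…,x_{n-1},y_0,…,y_{n-1}]` (indices mod `n`), with
`f_j = x_{j-2} y_j - x_j y_{j+1}` for `j = 1,…,n-1` and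
`g_1 = x_0 y_1 - x_{n-2} y_0`, every binomial
`g_k = x_{2k-2} ∏_{i ∈ [0,2k), i odd} y_i - x_{n-2} ∏_{i ∈ [0,2k), i even} y_i`
with `1 ≤ k ≤ ⌊n/2⌋` belongs to `L = (f_1,…,f_{n-1},g_1)`. -/
theorem gk_mem_symmetric_ideal (K : Type*) [Field K] (n : ℕ) (hn : 3 ≤ n)
    (x y : ZMod n → MvPolynomial (ZMod n ⊕ ZMod n) K)
    (hx : ∀ i, x i = X (Sum.inl i)) (hy : ∀ i, y i = X (Sum.inr i))
    (L : Ideal (MvPolynomial (ZMod n ⊕ ZMod n) K))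
    (hL : L = Ideal.span
      ({p | ∃ j : ℕ, 1 ≤ j ∧ j ≤ n - 1 ∧
          p = x ((j : ZMod n) - 2) * y (j : ZMod n)
            - x (j : ZMod n) * y ((j : ZMod n) + 1)} ∪
        {x 0 * y 1 - x ((n : ZMod n) - 2) * y 0})) :
    ∀ k : ℕ, 1 ≤ k → k ≤ n / 2 →
      x (((2 * k - 2 : ℕ) : ZMod n))
          * ∏ i ∈ (Finset.range (2 * k)).filter (fun i => Odd i), y (i : ZMod n)
        - x ((n : ZMod n) - 2)
          * ∏ i ∈ (Finset.range (2 * k)).filter (fun i => Even i), y (i : ZMod n)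
        ∈ L :=
  gk_mem_symmetric_ideal_general K n x y L hL
end

section
/- Let n ≥ 4 be even, T = K[x_0,…,x_{n-1}, y_0,…,y_{n-1}] with indices modulo n, and L ⊂ T the ideal generated by f_j = x_{n/2 + j} y_j - x_j y_{j+1} for j = 1,…,n-1 and g_1 = x_0 y_1 - x_{n/2} y_0. Then for every k with 1 ≤ k ≤ n/2 − 1, the binomial g_k = y_k · ∏_{i=0}^{k-1} x_i − y_0 · ∏_{i=n/2}^{k-1+n/2} x_i belongs to L. -/
open MvPolynomial

/- `g_{k+1} = x_{n/2+k} g_k - (x_0 ⋯ x_{k-1}) f_k`, so the binomials telescope: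
`g_1 = -(x_{n/2} y_0 - x_0 y_1)` plays the role of `f_0`, and induction on `k` puts
every `g_k` in `L`. -/

theorem Ideal.mul_prod_range_sub_mul_prod_range_mem {R : Type*} [CommRing R] {I : Ideal R}
    {a b y : ℕ → R} {k : ℕ} (h : ∀ j < k, b j * y j - a j * y (j + 1) ∈ I) :
    y k * ∏ i ∈ Finset.range k, a i - y 0 * ∏ i ∈ Finset.range k, b i ∈ I := by
  induction k with
  | zero => simp
  | succ k ih =>
    have step : y (k + 1) * ∏ i ∈ Finset.range (k + 1), a i
          - y 0 * ∏ i ∈ Finset.range (k + 1), b i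
        = b k * (y k * ∏ i ∈ Finset.range k, a i - y 0 * ∏ i ∈ Finset.range k, b i)
          - (∏ i ∈ Finset.range k, a i) * (b k * y k - a k * y (k + 1)) := by
      simp only [Finset.prod_range_succ]
      ring
    rw [step]
    exact I.sub_mem (I.mul_mem_left _ (ih fun j hj => h j (by omega)))
      (I.mul_mem_left _ (h k (by omega)))

theorem gk_mem_symmetric_ideal_half_path_general (K : Type*) [Field K] (n : ℕ)
    (x y : ZMod n → MvPolynomial (ZMod n ⊕ ZMod n) K)
    (L : Ideal (MvPolynomial (ZMod n ⊕ ZMod n) K))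
    (hL : L = Ideal.span
      ({p | ∃ j : ℕ, 1 ≤ j ∧ j ≤ n - 1 ∧
          p = x (((n / 2 + j : ℕ) : ZMod n)) * y (j : ZMod n)
            - x (j : ZMod n) * y ((j : ZMod n) + 1)} ∪
        {x 0 * y 1 - x (((n / 2 : ℕ) : ZMod n)) * y 0})) :
    ∀ k : ℕ, 1 ≤ k → k ≤ n / 2 - 1 →
      y (k : ZMod n) * ∏ i ∈ Finset.range k, x (i : ZMod n)
        - y 0 * ∏ i ∈ Finset.range k, x (((n / 2 + i : ℕ) : ZMod n))
        ∈ L := by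
  intro k _ hk
  have hgen : ∀ j < k, x (((n / 2 + j : ℕ) : ZMod n)) * y (j : ZMod n)
      - x (j : ZMod n) * y ((j + 1 : ℕ) : ZMod n) ∈ L := by
    intro j hj
    rcases j with _ | j
    · have hg₁ : x 0 * y 1 - x (((n / 2 : ℕ) : ZMod n)) * y 0 ∈ L :=
        hL ▸ Ideal.subset_span (Or.inr rfl)
      simpa using L.neg_mem hg₁
    · rw [hL]
      exact Ideal.subset_span (Or.inl ⟨j + 1, by omega, by omega, by push_cast; rfl⟩)
  simpa using Ideal.mul_prod_range_sub_mul_prod_range_mem (a := fun i => x i)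
    (b := fun i => x ((n / 2 + i : ℕ) : ZMod n)) (y := fun i => y i) hgen

/-- In `T = K[x_0,…,x_{n-1},y_0,…,y_{n-1}]` (indices mod `n`, `n` even), with
`f_j = x_{n/2+j} y_j - x_j y_{j+1}` for `j = 1,…,n-1` and
`g_1 = x_0 y_1 - x_{n/2} y_0`, every binomial
`g_k = y_k ∏_{i=0}^{k-1} x_i - y_0 ∏_{i=n/2}^{k-1+n/2} x_i`
with `1 ≤ k ≤ n/2 - 1` belongs to `L = (f_1,…,f_{n-1},g_1)`. -/
theorem gk_mem_symmetric_ideal_half_path (K : Type*) [Field K] (n : ℕ)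
    (hn : 4 ≤ n) (hev : Even n)
    (x y : ZMod n → MvPolynomial (ZMod n ⊕ ZMod n) K)
    (hx : ∀ i, x i = X (Sum.inl i)) (hy : ∀ i, y i = X (Sum.inr i))
    (L : Ideal (MvPolynomial (ZMod n ⊕ ZMod n) K))
    (hL : L = Ideal.span
      ({p | ∃ j : ℕ, 1 ≤ j ∧ j ≤ n - 1 ∧
          p = x (((n / 2 + j : ℕ) : ZMod n)) * y (j : ZMod n)
            - x (j : ZMod n) * y ((j : ZMod n) + 1)} ∪
        {x 0 * y 1 - x (((n / 2 : ℕ) : ZMod n)) * y 0})) :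
    ∀ k : ℕ, 1 ≤ k → k ≤ n / 2 - 1 →
      y (k : ZMod n) * ∏ i ∈ Finset.range k, x (i : ZMod n)
        - y 0 * ∏ i ∈ Finset.range k, x (((n / 2 + i : ℕ) : ZMod n))
        ∈ L :=
  gk_mem_symmetric_ideal_half_path_general K n x y L hL
end
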